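/- Let r ≥ 1 and let G be a simple graph such that for every vertex v of G the subgraph of G induced on the ball B_G(v,r) of radius r around v is bipartite. Then for every vertex (x,k) of the bipartite double cover G̃, the projection π restricts to an isomorphism from the subgraph of G̃ induced on the ball B_{G̃}((x,k), r−1) onto the subgraph of G induced on the ball B_G(x, r−1). -/

import Mathlib

/-- The bipartite double cover of a simple graph `G`: vertices are pairs `(x, i)` with
`x` a vertex of `G` and `i ∈ ℤ/2ℤ`, and `(x, i)` is adjacent to `(y, j)` iff
`x` is adjacent to `y` in `G` and `j = i + 1`. -/
def doubleCover {V : Type*} (G : SimpleGraph V) : SimpleGraph (V × ZMod 2) where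
  Adj p q := G.Adj p.1 q.1 ∧ q.2 = p.2 + 1
  symm := by
    constructor
    rintro ⟨x, i⟩ ⟨y, j⟩ ⟨h, hj⟩
    refine ⟨h.symm, ?_⟩
    subst hj
    simp [add_assoc, CharTwo.add_self_eq_zero]
  loopless := by
    constructor
    rintro ⟨x, i⟩ ⟨h, _⟩
    exact G.irrefl h

/-- The ball of radius `r` around a vertex `v` of a simple graph `G`: the set of vertices
at graph distance at most `r` from `v`, i.e. reachable from `v` by a walk of length at
most `r`. -/
def ball {V : Type*} (G : SimpleGraph V) (v : V) (r : ℕ) : Set V :=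
  {u : V | ∃ w : G.Walk v u, w.length ≤ r}

/-!
A walk in the double cover changes the `ZMod 2` coordinate once per step, so its endpoint is
determined by its length mod 2. Inside a ball on which `G` is bipartite, the length mod 2 of a
walk from `a` to `b` is `D b - D a` for a 2-colouring `D : V → ZMod 2` of the ball. Hence the
points of the ball of the double cover around `(x, k)` are exactly the pairs `(y, k + D y - D x)`
with `y` in the ball of `G` around `x`, and adjacency is preserved because `D` flips along every
edge.
-/

open SimpleGraph (Walk recolorOfEquiv)

section

variable {V : Type*} {G : SimpleGraph V}

lemma ball_mono {v : V} {r s : ℕ} (h : r ≤ s) : ball G v r ⊆ ball G v s :=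
  fun _ ⟨w, hw⟩ => ⟨w, hw.trans h⟩

lemma mem_ball_of_mem_support {v u y : V} {r : ℕ} (w : G.Walk v u) (hw : w.length ≤ r)
    (hy : y ∈ w.support) : y ∈ ball G v r := by
  classical
  exact ⟨w.takeUntil y hy, (w.length_takeUntil_le_length hy).trans hw⟩

lemma ZMod.eq_add_one_of_ne : ∀ {a b : ZMod 2}, a ≠ b → b = a + 1 := by decide

def IsParityOn (G : SimpleGraph V) (S : Set V) (D : V → ZMod 2) : Prop :=
  ∀ a ∈ S, ∀ b ∈ S, G.Adj a b → D b = D a + 1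

lemma IsParityOn.mono {S T : Set V} {D : V → ZMod 2} (hD : IsParityOn G T D) (hST : S ⊆ T) :
    IsParityOn G S D :=
  fun a ha b hb => hD a (hST ha) b (hST hb)

lemma exists_isParityOn_of_colorable {S : Set V} (h : (G.induce S).Colorable 2) :
    ∃ D : V → ZMod 2, IsParityOn G S D := by
  classical
  obtain ⟨c⟩ := h
  let c' := recolorOfEquiv _ (ZMod.finEquiv 2).toEquiv c
  refine ⟨fun y => if hy : y ∈ S then c' ⟨y, hy⟩ else 0, fun a ha b hb hab => ?_⟩
  simp only [dif_pos ha, dif_pos hb]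
  exact ZMod.eq_add_one_of_ne (c'.valid (show G.Adj a b from hab))

lemma IsParityOn.eq_add_length {S : Set V} {D : V → ZMod 2} (hD : IsParityOn G S D)
    {a b : V} (w : G.Walk a b)
    (hw : ∀ y ∈ w.support, y ∈ S) : D b = D a + w.length := by
  induction w with
  | nil => simp
  | @cons a c b hac w ih =>
    have hstep := hD a (hw a (by simp)) c (hw c (by simp)) hac
    rw [ih fun y hy => hw y (by simp [hy]), hstep, Walk.length_cons]
    push_cast
    ring

def doubleCoverFst (G : SimpleGraph V) : doubleCover G →g G :=
  ⟨Prod.fst, And.left⟩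

lemma doubleCover_walk_snd {p q : V × ZMod 2} (w : (doubleCover G).Walk p q) :
    q.2 = p.2 + w.length := by
  induction w with
  | nil => simp
  | cons hpq w ih =>
    rw [ih, hpq.2, Walk.length_cons]
    push_cast
    ring

lemma exists_doubleCover_walk {a b : V} (w : G.Walk a b) (i : ZMod 2) :
    ∃ w' : (doubleCover G).Walk (a, i) (b, i + w.length), w'.length = w.length := by
  induction w generalizing i with
  | nil => exact ⟨Walk.nil.copy rfl (by simp), by rw [Walk.length_copy]; rfl⟩
  | @cons a c b hac w ih =>
    obtain ⟨w', hw'⟩ := ih (i + 1)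
    have hend : i + 1 + (w.length : ZMod 2) = i + ((w.cons hac).length : ℕ) := by
      rw [Walk.length_cons]; push_cast; ring
    exact ⟨Walk.cons ⟨hac, rfl⟩ (w'.copy rfl (by rw [hend])),
      congrArg (· + 1) ((Walk.length_copy _ _ _).trans hw')⟩

lemma mem_ball_doubleCover_iff {D : V → ZMod 2} {x : V} {r : ℕ}
    (hD : IsParityOn G (ball G x r) D)
    (k : ZMod 2) (p : V × ZMod 2) :
    p ∈ ball (doubleCover G) (x, k) r ↔ p.1 ∈ ball G x r ∧ p.2 = k + D p.1 - D x := by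
  constructor
  · rintro ⟨w, hw⟩
    let w₀ := w.map (doubleCoverFst G)
    have hw₀ : w₀.length ≤ r := by rwa [Walk.length_map]
    have hD₀ : D p.1 = D x + w₀.length :=
      hD.eq_add_length w₀ fun y hy => mem_ball_of_mem_support w₀ hw₀ hy
    refine ⟨⟨w₀, hw₀⟩, ?_⟩
    rw [doubleCover_walk_snd w, hD₀, Walk.length_map]
    ring
  · rintro ⟨⟨w, hw⟩, hp⟩
    obtain ⟨w', hw'⟩ := exists_doubleCover_walk w k
    have hD₀ := hD.eq_add_length w fun y hy => mem_ball_of_mem_support w hw hy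
    have hend : ((p.1, k + (w.length : ZMod 2)) : V × ZMod 2) = p := by
      ext
      · rfl
      · rw [hp, hD₀]; ring
    exact ⟨w'.copy rfl hend, by rwa [Walk.length_copy, hw']⟩

theorem exists_doubleCover_induce_ball_iso {D : V → ZMod 2} {x : V} {r : ℕ}
    (hD : IsParityOn G (ball G x r) D) (k : ZMod 2) :
    ∃ φ : (doubleCover G).induce (ball (doubleCover G) (x, k) r) ≃g G.induce (ball G x r),
      ∀ p : ball (doubleCover G) (x, k) r, (φ p : V) = (p : V × ZMod 2).1 := by
  have hmem := mem_ball_doubleCover_iff hD k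
  let e : ball (doubleCover G) (x, k) r ≃ ball G x r :=
    { toFun := fun p => ⟨p.1.1, ((hmem p).1 p.2).1⟩
      invFun := fun y => ⟨(y, k + D y - D x), (hmem _).2 ⟨y.2, rfl⟩⟩
      left_inv := fun p => Subtype.ext (Prod.ext rfl ((hmem p).1 p.2).2.symm)
      right_inv := fun _ => rfl }
  refine ⟨⟨e, fun {p q} => ⟨fun hpq => ⟨hpq, ?_⟩, And.left⟩⟩, fun _ => rfl⟩
  obtain ⟨hp, hp₂⟩ := (hmem p).1 p.2
  obtain ⟨hq, hq₂⟩ := (hmem q).1 q.2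
  change q.1.2 = p.1.2 + 1
  rw [hp₂, hq₂, hD _ hp _ hq hpq]
  ring

end

theorem doubleCover_ball_iso_general {V : Type*} (G : SimpleGraph V) (r : ℕ)
    (hballs : ∀ v : V, (G.induce (ball G v r)).Colorable 2)
    (x : V) (k : ZMod 2) :
    ∃ φ : (doubleCover G).induce (ball (doubleCover G) (x, k) (r - 1)) ≃g
            G.induce (ball G x (r - 1)),
      ∀ p : ball (doubleCover G) (x, k) (r - 1), (φ p : V) = (p : V × ZMod 2).1 := by
  obtain ⟨D, hD⟩ := exists_isParityOn_of_colorable (hballs x)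
  exact exists_doubleCover_induce_ball_iso (hD.mono (ball_mono (Nat.sub_le r 1))) k

/-- Let `r ≥ 1` and let `G` be a simple graph all of whose balls of radius `r` induce a
bipartite subgraph.  Then for every vertex `(x, k)` of the bipartite double cover of `G`,
the projection `(y, i) ↦ y` restricts to an isomorphism from the subgraph of the double
cover induced on the ball of radius `r - 1` around `(x, k)` onto the subgraph of `G`
induced on the ball of radius `r - 1` around `x`. -/
theorem doubleCover_ball_iso {V : Type*} (G : SimpleGraph V) (r : ℕ) (hr : 1 ≤ r)
    (hballs : ∀ v : V, (G.induce (ball G v r)).Colorable 2)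
    (x : V) (k : ZMod 2) :
    ∃ φ : (doubleCover G).induce (ball (doubleCover G) (x, k) (r - 1)) ≃g
            G.induce (ball G x (r - 1)),
      ∀ p : ball (doubleCover G) (x, k) (r - 1), (φ p : V) = (p : V × ZMod 2).1 :=
  doubleCover_ball_iso_general G r hballs x k
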